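/- Let G be a semigroup and let Gᶿ = WithZero G be the semigroup obtained by adjoining a zero element 0 to G. Then the map 𝒯 ↦ {{0}} ∪ {↑X : X ∈ 𝒯} (where ↑X is the image of the block X under the canonical embedding G → WithZero G) is a bijection between the Schur rings over G and the Schur rings over Gᶿ; that is, a partition 𝒯 of G into nonempty finite blocks is a Schur ring over G if and only if {{0}} ∪ {↑X : X ∈ 𝒯} is a Schur ring over Gᶿ, and every Schur ring over Gᶿ is of this form. -/

import Mathlib

open scoped Pointwise

/-- The simple quantity `[X] = ∑_{x ∈ X} x` in the semigroup algebra `MonoidAlgebra ℚ G`. -/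
noncomputable def simpleQty {G : Type*} [Mul G] (X : Finset G) : MonoidAlgebra ℚ G :=
  ∑ x ∈ X, MonoidAlgebra.single x (1 : ℚ)

/-- A partition of `G` into nonempty finite blocks. -/
def IsPartition {G : Type*} (S : Set (Set G)) : Prop :=
  (∀ X ∈ S, X.Nonempty ∧ X.Finite) ∧ ∀ x : G, ∃! X, X ∈ S ∧ x ∈ X

/-- The ℚ-linear span of the simple quantities of the blocks of `S`. -/
noncomputable def schurSpan {G : Type*} [Mul G] (S : Set (Set G)) :
    Submodule ℚ (MonoidAlgebra ℚ G) :=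
  Submodule.span ℚ { z | ∃ X ∈ S, ∃ hX : X.Finite, z = simpleQty hX.toFinset }

/-- A Schur ring over the semigroup `G`. -/
def IsSchurRing {G : Type*} [Semigroup G] (S : Set (Set G)) : Prop :=
  IsPartition S ∧ ∀ X ∈ S, ∀ Y ∈ S, ∀ (hX : X.Finite) (hY : Y.Finite),
    simpleQty hX.toFinset * simpleQty hY.toFinset ∈ schurSpan S

section Helpers

lemma simpleQty_apply {H : Type*} [Mul H] [DecidableEq H] (X : Finset H) (a : H) :
    (simpleQty X).coeff a = if a ∈ X then (1:ℚ) else 0 := by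
  rw [simpleQty, MonoidAlgebra.coeff_sum, Finsupp.finset_sum_apply]
  simp only [MonoidAlgebra.coeff_single, Finsupp.single_apply]
  rw [Finset.sum_ite_eq' X a (fun _ => (1:ℚ))]

lemma simpleQty_congr {H : Type*} [Mul H] {X Y : Finset H} (h : ∀ a, a ∈ X ↔ a ∈ Y) :
    simpleQty X = simpleQty Y := by
  have : X = Y := Finset.ext h
  rw [this]

lemma simpleQty_singletonSet {H : Type*} [Mul H] (a : H) (h : ({a} : Set H).Finite) :
    simpleQty h.toFinset = MonoidAlgebra.single a 1 := by
  have h2 : h.toFinset = {a} := by ext; simp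
  rw [h2, simpleQty, Finset.sum_singleton]

lemma simpleQty_mul {H : Type*} [Mul H] (X Y : Finset H) :
    simpleQty X * simpleQty Y = ∑ a ∈ X, ∑ b ∈ Y, MonoidAlgebra.single (a*b) (1:ℚ) := by
  simp [simpleQty, Finset.sum_mul_sum, MonoidAlgebra.single_mul_single]

lemma simpleQty_mul_apply {H : Type*} [Mul H] [DecidableEq H] (X Y : Finset H) (t : H) :
    (simpleQty X * simpleQty Y).coeff t = ∑ a ∈ X, ∑ b ∈ Y, if a*b = t then (1:ℚ) else 0 := by
  rw [simpleQty_mul]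
  rw [MonoidAlgebra.coeff_sum, Finsupp.finset_sum_apply]
  refine Finset.sum_congr rfl fun a _ => ?_
  rw [MonoidAlgebra.coeff_sum, Finsupp.finset_sum_apply]
  refine Finset.sum_congr rfl fun b _ => ?_
  rw [MonoidAlgebra.coeff_single, Finsupp.single_apply]

lemma IsPartition.block_eq {H : Type*} {S : Set (Set H)} (hS : IsPartition S)
    {C D : Set H} {x : H} (hC : C ∈ S) (hD : D ∈ S) (hxC : x ∈ C) (hxD : x ∈ D) : C = D := by
  obtain ⟨U, _, hU⟩ := hS.2 x
  rw [hU C ⟨hC, hxC⟩, hU D ⟨hD, hxD⟩]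

lemma schurSpan_const {H : Type*} [Mul H] {S : Set (Set H)} (hS : IsPartition S)
    [DecidableEq H] {z : MonoidAlgebra ℚ H} (hz : z ∈ schurSpan S) {C : Set H} (hC : C ∈ S) {x y : H}
    (hx : x ∈ C) (hy : y ∈ C) : z.coeff x = z.coeff y := by
  induction hz using Submodule.span_induction with
  | mem w hw =>
    obtain ⟨X, hXS, hXf, rfl⟩ := hw
    rw [simpleQty_apply, simpleQty_apply]
    have : x ∈ hXf.toFinset ↔ y ∈ hXf.toFinset := by
      simp only [Set.Finite.mem_toFinset]
      constructor
      · intro h; rw [hS.block_eq hC hXS hx h] at hy; exact hy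
      · intro h; rw [hS.block_eq hC hXS hy h] at hx; exact hx
    simp only [this]
  | zero => simp
  | add u v _ _ hu hv =>
    show (u + v).coeff x = (u + v).coeff y
    rw [MonoidAlgebra.coeff_add, Finsupp.add_apply, Finsupp.add_apply, hu, hv]
  | smul c u _ hu =>
    show (c • u).coeff x = (c • u).coeff y
    rw [MonoidAlgebra.coeff_smul_apply, MonoidAlgebra.coeff_smul_apply, hu]

end Helpers

section WZ
variable {G : Type*} [Semigroup G]

lemma coeFun_injective : Function.Injective (fun g : G => (g : WithZero G)) :=
  fun _ _ h => Option.some_injective G h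

noncomputable def wzHom (G : Type*) [Semigroup G] : G →ₙ* WithZero G :=
  ⟨fun g => (g : WithZero G), fun a b => WithZero.coe_mul a b⟩

lemma mapDomain_simpleQty [DecidableEq (WithZero G)] (X : Finset G) :
    MonoidAlgebra.mapDomain (fun g : G => (g : WithZero G)) (simpleQty X)
      = simpleQty (X.image (fun g : G => (g : WithZero G))) := by
  rw [simpleQty, simpleQty,
    Finset.sum_image (fun a _ b _ h => coeFun_injective h)]
  refine (map_sum (MonoidAlgebra.mapDomainLinearMap ℚ ℚ (fun g : G => (g : WithZero G))) _ _).trans ?_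
  exact Finset.sum_congr rfl fun a _ => MonoidAlgebra.mapDomainLinearMap_single _ _ _

lemma phi_mem {T : Set (Set G)} {z : MonoidAlgebra ℚ G} (hz : z ∈ schurSpan T) :
    MonoidAlgebra.mapDomain (fun g : G => (g : WithZero G)) z ∈
      schurSpan (insert ({(0 : WithZero G)} : Set (WithZero G))
        ((fun X : Set G => (fun g : G => (g : WithZero G)) '' X) '' T)) := by
  induction hz using Submodule.span_induction with
  | mem w hw =>
    obtain ⟨X, hX, hXf, rfl⟩ := hw
    apply Submodule.subset_span
    refine ⟨(fun g : G => (g : WithZero G)) '' X, Set.mem_insert_of_mem _ ⟨X, hX, rfl⟩,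
      hXf.image _, ?_⟩
    classical
    rw [mapDomain_simpleQty]
    refine simpleQty_congr fun a => ?_
    simp [Set.Finite.mem_toFinset]
  | zero => rw [MonoidAlgebra.mapDomain_zero]; exact Submodule.zero_mem _
  | add u v _ _ hu hv => rw [MonoidAlgebra.mapDomain_add]; exact Submodule.add_mem _ hu hv
  | smul c u _ hu => rw [MonoidAlgebra.mapDomain_smul]; exact Submodule.smul_mem _ _ hu

noncomputable def psi (G : Type*) [Semigroup G] :
    MonoidAlgebra ℚ (WithZero G) →ₗ[ℚ] MonoidAlgebra ℚ G :=
  (MonoidAlgebra.coeffLinearEquiv ℚ).symm.toLinearMap ∘ₗ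
    Finsupp.lcomapDomain (fun g : G => (g : WithZero G)) coeFun_injective ∘ₗ
    (MonoidAlgebra.coeffLinearEquiv ℚ).toLinearMap

lemma psi_apply (w : MonoidAlgebra ℚ (WithZero G)) (a : G) : (psi G w).coeff a = w.coeff (a : WithZero G) :=
  rfl

lemma psi_mapDomain (z : MonoidAlgebra ℚ G) :
    psi G (MonoidAlgebra.mapDomain (fun g : G => (g : WithZero G)) z) = z := by
  ext a
  rw [psi_apply, MonoidAlgebra.coeff_mapDomain, Finsupp.mapDomain_apply coeFun_injective]

lemma psi_simpleQty_zero (h : ({(0 : WithZero G)} : Set (WithZero G)).Finite) :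
    psi G (simpleQty h.toFinset) = 0 := by
  rw [simpleQty_singletonSet]
  classical
  ext a
  rw [psi_apply, MonoidAlgebra.coeff_single, Finsupp.single_apply]
  simp

lemma psi_simpleQty_image {X : Set G} (hX : X.Finite)
    (h : ((fun g : G => (g : WithZero G)) '' X).Finite) :
    psi G (simpleQty h.toFinset) = simpleQty hX.toFinset := by
  classical
  ext a
  rw [psi_apply, simpleQty_apply, simpleQty_apply]
  have : (a : WithZero G) ∈ h.toFinset ↔ a ∈ hX.toFinset := by
    simp only [Set.Finite.mem_toFinset, Set.mem_image]
    constructor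
    · rintro ⟨b, hb, hba⟩; rwa [coeFun_injective hba] at hb
    · intro ha; exact ⟨a, ha, rfl⟩
  simp only [this]

lemma psi_mem {T : Set (Set G)} {w : MonoidAlgebra ℚ (WithZero G)}
    (hw : w ∈ schurSpan (insert ({(0 : WithZero G)} : Set (WithZero G))
        ((fun X : Set G => (fun g : G => (g : WithZero G)) '' X) '' T))) :
    psi G w ∈ schurSpan T := by
  induction hw using Submodule.span_induction with
  | mem w hw =>
    obtain ⟨C, hC, hCf, rfl⟩ := hw
    rcases hC with rfl | ⟨X, hX, rfl⟩
    · rw [psi_simpleQty_zero]; exact Submodule.zero_mem _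
    · have hXf : X.Finite :=
        Set.Finite.of_finite_image hCf (Set.injOn_of_injective coeFun_injective)
      rw [psi_simpleQty_image hXf hCf]
      exact Submodule.subset_span ⟨X, hX, hXf, rfl⟩
  | zero => rw [map_zero]; exact Submodule.zero_mem _
  | add u v _ _ hu hv => rw [map_add]; exact Submodule.add_mem _ hu hv
  | smul c u _ hu => rw [map_smul]; exact Submodule.smul_mem _ _ hu

end WZ

section Main
variable {G : Type*} [Semigroup G]

lemma simpleQty_image_eq {X : Set G} (hXf : X.Finite)
    (h : ((fun g : G => (g : WithZero G)) '' X).Finite) :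
    simpleQty h.toFinset
      = MonoidAlgebra.mapDomain (fun g : G => (g : WithZero G)) (simpleQty hXf.toFinset) := by
  classical
  rw [mapDomain_simpleQty]
  exact simpleQty_congr fun a => by simp [Set.Finite.mem_toFinset]

lemma simpleQty_image_mul {X Y : Set G} (hXf : X.Finite) (hYf : Y.Finite)
    (hA : ((fun g : G => (g : WithZero G)) '' X).Finite)
    (hB : ((fun g : G => (g : WithZero G)) '' Y).Finite) :
    simpleQty hA.toFinset * simpleQty hB.toFinset
      = MonoidAlgebra.mapDomain (fun g : G => (g : WithZero G))
          (simpleQty hXf.toFinset * simpleQty hYf.toFinset) := by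
  rw [simpleQty_image_eq hXf hA, simpleQty_image_eq hYf hB]
  exact (MonoidAlgebra.mapDomain_mul (wzHom G) _ _).symm

lemma image_partition {T : Set (Set G)} (hT : IsPartition T) :
    IsPartition (insert ({(0 : WithZero G)} : Set (WithZero G))
      ((fun X : Set G => (fun g : G => (g : WithZero G)) '' X) '' T)) := by
  constructor
  · rintro X (rfl | ⟨Y, hY, rfl⟩)
    · exact ⟨⟨0, rfl⟩, Set.finite_singleton _⟩
    · exact ⟨(hT.1 Y hY).1.image _, (hT.1 Y hY).2.image _⟩
  · intro t
    by_cases ht : t = 0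
    · subst ht
      refine ⟨{0}, ⟨Set.mem_insert _ _, rfl⟩, ?_⟩
      rintro Y ⟨(rfl | ⟨X, hX, rfl⟩), h0Y⟩
      · rfl
      · obtain ⟨x, _, hx⟩ := h0Y
        exact absurd hx (WithZero.coe_ne_zero)
    · obtain ⟨g, rfl⟩ := WithZero.ne_zero_iff_exists.mp ht
      obtain ⟨X, ⟨hXT, hgX⟩, hXuniq⟩ := hT.2 g
      refine ⟨(fun g : G => (g : WithZero G)) '' X,
        ⟨Set.mem_insert_of_mem _ ⟨X, hXT, rfl⟩, ⟨g, hgX, rfl⟩⟩, ?_⟩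
      rintro Y ⟨(rfl | ⟨X', hX', rfl⟩), hgY⟩
      · exact absurd hgY WithZero.coe_ne_zero
      · obtain ⟨x', hx', hxx⟩ := hgY
        obtain rfl := coeFun_injective hxx
        rw [hXuniq X' ⟨hX', hx'⟩]

lemma forward_schur {T : Set (Set G)} (hT : IsSchurRing T) :
    IsSchurRing (insert ({(0 : WithZero G)} : Set (WithZero G))
      ((fun X : Set G => (fun g : G => (g : WithZero G)) '' X) '' T)) := by
  refine ⟨image_partition hT.1, ?_⟩
  have hz : MonoidAlgebra.single (0 : WithZero G) (1:ℚ) ∈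
      schurSpan (insert ({(0 : WithZero G)} : Set (WithZero G))
        ((fun X : Set G => (fun g : G => (g : WithZero G)) '' X) '' T)) :=
    Submodule.subset_span ⟨{0}, Set.mem_insert _ _, Set.finite_singleton _,
      (simpleQty_singletonSet _ _).symm⟩
  rintro A (rfl | ⟨X, hX, rfl⟩) B (rfl | ⟨Y, hY, rfl⟩) hAf hBf
  · rw [simpleQty_singletonSet, MonoidAlgebra.single_mul_single, mul_zero, one_mul]
    exact hz
  · rw [simpleQty_singletonSet, simpleQty, Finset.mul_sum]
    simp only [MonoidAlgebra.single_mul_single, zero_mul, one_mul]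
    rw [Finset.sum_const]
    exact nsmul_mem hz _
  · rw [simpleQty_singletonSet, simpleQty, Finset.sum_mul]
    simp only [MonoidAlgebra.single_mul_single, mul_zero, one_mul]
    rw [Finset.sum_const]
    exact nsmul_mem hz _
  · have hXf : X.Finite :=
      Set.Finite.of_finite_image hAf (Set.injOn_of_injective coeFun_injective)
    have hYf : Y.Finite :=
      Set.Finite.of_finite_image hBf (Set.injOn_of_injective coeFun_injective)
    rw [simpleQty_image_mul hXf hYf hAf hBf]
    exact phi_mem (hT.2 X hX Y hY hXf hYf)

lemma backward_schur {T : Set (Set G)} (hT : IsPartition T)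
    (hS : IsSchurRing (insert ({(0 : WithZero G)} : Set (WithZero G))
      ((fun X : Set G => (fun g : G => (g : WithZero G)) '' X) '' T))) :
    IsSchurRing T := by
  refine ⟨hT, ?_⟩
  intro X hX Y hY hXf hYf
  have hA : (fun g : G => (g : WithZero G)) '' X ∈ insert ({(0 : WithZero G)} : Set (WithZero G))
      ((fun X : Set G => (fun g : G => (g : WithZero G)) '' X) '' T) :=
    Set.mem_insert_of_mem _ ⟨X, hX, rfl⟩
  have hB : (fun g : G => (g : WithZero G)) '' Y ∈ insert ({(0 : WithZero G)} : Set (WithZero G))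
      ((fun X : Set G => (fun g : G => (g : WithZero G)) '' X) '' T) :=
    Set.mem_insert_of_mem _ ⟨Y, hY, rfl⟩
  have hw := hS.2 _ hA _ hB (hXf.image _) (hYf.image _)
  rw [simpleQty_image_mul hXf hYf (hXf.image _) (hYf.image _)] at hw
  have := psi_mem hw
  rwa [psi_mapDomain] at this

end Main

section ZeroBlock
variable {G : Type*} [Semigroup G]

lemma zero_block {S : Set (Set (WithZero G))} (hS : IsSchurRing S) :
    ({(0 : WithZero G)} : Set (WithZero G)) ∈ S := by
  classical
  obtain ⟨B, ⟨hBS, h0B⟩, _⟩ := hS.1.2 0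
  suffices h : B = {0} by rwa [h] at hBS
  have hBf : B.Finite := (hS.1.1 B hBS).2
  set K := hBf.toFinset with hK
  have h0K : (0 : WithZero G) ∈ K := hBf.mem_toFinset.mpr h0B
  set z := simpleQty K * simpleQty K with hzdef
  have hzmem : z ∈ schurSpan S := hS.2 B hBS B hBS hBf hBf
  have hz0 : z.coeff 0 = 2 * (K.card : ℚ) - 1 := by
    rw [hzdef, simpleQty_mul_apply]
    have inner : ∀ a ∈ K, (∑ b ∈ K, if a * b = 0 then (1:ℚ) else 0)
        = if a = 0 then (K.card : ℚ) else 1 := by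
      intro a _
      by_cases ha : a = 0
      · subst ha
        simp [zero_mul]
      · have hco : ∀ b : WithZero G, (a * b = 0) ↔ (b = 0) := by
          intro b
          constructor
          · intro h
            rcases mul_eq_zero.mp h with h | h
            · exact absurd h ha
            · exact h
          · intro h; rw [h, mul_zero]
        simp only [hco]
        rw [Finset.sum_ite_eq' K (0 : WithZero G) (fun _ => (1:ℚ)), if_pos h0K, if_neg ha]
    rw [Finset.sum_congr rfl inner]
    have step : ∀ a ∈ K, (if a = 0 then (K.card:ℚ) else 1)
        = (if a = 0 then (K.card:ℚ) - 1 else 0) + 1 := by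
      intro a _; split_ifs <;> ring
    rw [Finset.sum_congr rfl step, Finset.sum_add_distrib,
      Finset.sum_ite_eq' K (0:WithZero G) (fun _ => (K.card:ℚ)-1), if_pos h0K,
      Finset.sum_const, nsmul_eq_mul, mul_one]
    ring
  have hconst : ∀ t ∈ K, z.coeff t = z.coeff 0 := fun t ht =>
    schurSpan_const hS.1 hzmem hBS (hBf.mem_toFinset.mp ht) h0B
  have hbound : (∑ t ∈ K, z.coeff t) ≤ (K.card : ℚ) * K.card := by
    have hrw : ∀ t : WithZero G, z.coeff t = ∑ a ∈ K, ∑ b ∈ K, if a*b = t then (1:ℚ) else 0 :=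
      fun t => by rw [hzdef, simpleQty_mul_apply]
    calc (∑ t ∈ K, z.coeff t) = ∑ a ∈ K, ∑ t ∈ K, ∑ b ∈ K, (if a*b = t then (1:ℚ) else 0) := by
          rw [Finset.sum_congr rfl (fun t _ => hrw t)]
          exact Finset.sum_comm
      _ = ∑ a ∈ K, ∑ b ∈ K, ∑ t ∈ K, (if a*b = t then (1:ℚ) else 0) := by
          exact Finset.sum_congr rfl fun a _ => Finset.sum_comm
      _ ≤ ∑ a ∈ K, ∑ b ∈ K, (1:ℚ) := by
          refine Finset.sum_le_sum fun a _ => Finset.sum_le_sum fun b _ => ?_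
          rw [Finset.sum_ite_eq K (a*b) (fun _ => (1:ℚ))]
          split_ifs <;> norm_num
      _ = (K.card : ℚ) * K.card := by
          simp [Finset.sum_const, nsmul_eq_mul, mul_comm]
  have hsum : (∑ t ∈ K, z.coeff t) = (K.card : ℚ) * z.coeff 0 := by
    rw [Finset.sum_congr rfl hconst, Finset.sum_const, nsmul_eq_mul]
  have hn1 : 1 ≤ K.card := Finset.card_pos.mpr ⟨0, h0K⟩
  have hcard : K.card = 1 := by
    rw [hsum, hz0] at hbound
    have hc : (1:ℚ) ≤ (K.card : ℚ) := by exact_mod_cast hn1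
    have : (K.card : ℚ) ≤ 1 := by nlinarith
    have h1 : K.card ≤ 1 := by exact_mod_cast this
    omega
  obtain ⟨c, hc⟩ := Finset.card_eq_one.mp hcard
  have hc0 : c = 0 := by rw [hc] at h0K; exact (Finset.mem_singleton.mp h0K).symm
  subst hc0
  calc B = ↑K := hBf.coe_toFinset.symm
    _ = {0} := by rw [hc, Finset.coe_singleton]

lemma zero_notin_block {S : Set (Set (WithZero G))} (hS : IsSchurRing S) {C : Set (WithZero G)}
    (hC : C ∈ S) (hne : C ≠ ({0} : Set (WithZero G))) : (0 : WithZero G) ∉ C :=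
  fun h0 => hne (hS.1.block_eq hC (zero_block hS) h0 rfl)

lemma surj_schur {S : Set (Set (WithZero G))} (hS : IsSchurRing S) :
    ∃ T : Set (Set G), IsSchurRing T ∧
      insert ({(0 : WithZero G)} : Set (WithZero G))
        ((fun X : Set G => (fun g : G => (g : WithZero G)) '' X) '' T) = S := by
  set T := (fun C : Set (WithZero G) => (fun g : G => (g : WithZero G)) ⁻¹' C) '' (S \ {{0}})
    with hT
  have himg : ∀ C ∈ S, C ≠ ({0} : Set (WithZero G)) →
      (fun g : G => (g : WithZero G)) '' ((fun g : G => (g : WithZero G)) ⁻¹' C) = C := by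
    intro C hC hne
    apply Set.image_preimage_eq_of_subset
    intro t ht
    have htne : t ≠ 0 := fun h => zero_notin_block hS hC hne (h ▸ ht)
    obtain ⟨g, rfl⟩ := WithZero.ne_zero_iff_exists.mp htne
    exact ⟨g, rfl⟩
  have hEq : insert ({(0 : WithZero G)} : Set (WithZero G))
      ((fun X : Set G => (fun g : G => (g : WithZero G)) '' X) '' T) = S := by
    apply Set.Subset.antisymm
    · rintro C (rfl | ⟨X, ⟨D, ⟨hD, hDne⟩, rfl⟩, rfl⟩)
      · exact zero_block hS
      · simpa only [himg D hD (fun h => hDne (by simp [h]))] using hD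
    · intro C hC
      by_cases hne : C = ({0} : Set (WithZero G))
      · rw [hne]; exact Set.mem_insert _ _
      · exact Set.mem_insert_of_mem _
          ⟨(fun g : G => (g : WithZero G)) ⁻¹' C, ⟨C, ⟨hC, by simp [hne]⟩, rfl⟩, himg C hC hne⟩
  have hTpart : IsPartition T := by
    constructor
    · rintro X ⟨C, ⟨hC, hCne⟩, rfl⟩
      have hCne' : C ≠ ({0} : Set (WithZero G)) := fun h => hCne (by simp [h])
      constructor
      · obtain ⟨t, ht⟩ := (hS.1.1 C hC).1
        have htne : t ≠ 0 := fun h => zero_notin_block hS hC hCne' (h ▸ ht)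
        obtain ⟨g, rfl⟩ := WithZero.ne_zero_iff_exists.mp htne
        exact ⟨g, ht⟩
      · exact Set.Finite.preimage (Set.injOn_of_injective coeFun_injective) (hS.1.1 C hC).2
    · intro g
      obtain ⟨C, ⟨hC, hgC⟩, huniq⟩ := hS.1.2 (g : WithZero G)
      have hCne : C ≠ ({0} : Set (WithZero G)) := by
        intro h; rw [h] at hgC; exact WithZero.coe_ne_zero hgC
      refine ⟨(fun g : G => (g : WithZero G)) ⁻¹' C, ⟨⟨C, ⟨hC, by simp [hCne]⟩, rfl⟩, hgC⟩, ?_⟩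
      rintro Y ⟨⟨D, ⟨hD, hDne⟩, rfl⟩, hgY⟩
      rw [huniq D ⟨hD, hgY⟩]
  refine ⟨T, ?_, hEq⟩
  apply backward_schur hTpart
  rw [hEq]
  exact hS

lemma zero_notin_image {T : Set (Set G)} (hT : IsPartition T) :
    ({(0 : WithZero G)} : Set (WithZero G)) ∉
      (fun X : Set G => (fun g : G => (g : WithZero G)) '' X) '' T := by
  rintro ⟨X, hX, hXeq⟩
  obtain ⟨x, hx⟩ := (hT.1 X hX).1
  have : (x : WithZero G) ∈ ({0} : Set (WithZero G)) := hXeq ▸ ⟨x, hx, rfl⟩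
  exact WithZero.coe_ne_zero this

end ZeroBlock

/-- `A` is an `S`-subset: a union of blocks of `S`. -/
def IsSUnion {G : Type*} (S : Set (Set G)) (A : Set G) : Prop :=
  ∀ X ∈ S, X ⊆ A ∨ X ∩ A = ∅

/-- for `Gᶿ = WithZero G`, a partition of `G` is a Schur ring iff its image
under the canonical embedding together with `{0}` is a Schur ring over `Gᶿ`, and this
assignment is a bijection between Schur rings over `G` and Schur rings over `Gᶿ`. -/
theorem withZero_schur {G : Type*} [Semigroup G] :
    (∀ T : Set (Set G), IsPartition T →
      (IsSchurRing T ↔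
        IsSchurRing (insert ({(0 : WithZero G)} : Set (WithZero G))
          ((fun X : Set G => (fun g : G => (g : WithZero G)) '' X) '' T)))) ∧
    Set.BijOn
      (fun T : Set (Set G) =>
        insert ({(0 : WithZero G)} : Set (WithZero G))
          ((fun X : Set G => (fun g : G => (g : WithZero G)) '' X) '' T))
      {T : Set (Set G) | IsSchurRing T}
      {S : Set (Set (WithZero G)) | IsSchurRing S} := by
  refine ⟨fun T hT => ⟨forward_schur, backward_schur hT⟩, ?_, ?_, ?_⟩
  · intro T hTmem
    exact forward_schur hTmem
  · intro T₁ h₁ T₂ h₂ h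
    simp only [Set.mem_setOf_eq] at h₁ h₂
    have n₁ := zero_notin_image h₁.1
    have n₂ := zero_notin_image h₂.1
    have e : (fun X : Set G => (fun g : G => (g : WithZero G)) '' X) '' T₁
        = (fun X : Set G => (fun g : G => (g : WithZero G)) '' X) '' T₂ := by
      have := congrArg (· \ {({(0 : WithZero G)} : Set (WithZero G))}) h
      simpa only [Set.insert_diff_self_of_notMem n₁,
        Set.insert_diff_self_of_notMem n₂] using this
    have hinj : Function.Injective (fun X : Set G => (fun g : G => (g : WithZero G)) '' X) :=
      Set.image_injective.mpr coeFun_injective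
    exact Set.image_injective.mpr hinj e
  · intro S hSmem
    obtain ⟨T, hTschur, hTeq⟩ := surj_schur hSmem
    exact ⟨T, hTschur, hTeq⟩
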